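/- arXiv:2410.20257 — 2 statements merged into one kernel-verified Lean document; each statement's English description precedes it below -/
import Mathlib

section
/- Let G be a finite connected simple graph with positive real edge weights. If a cutset D of G is relevant, then D is a bond of G, i.e., no cutset of G is a proper subset of D. -/
open Finset
open scoped Classical

variable {V : Type*}

/-- The edge boundary `∂S`: the set of edges of `G` with exactly one endpoint in `S`. -/
noncomputable def edgeBoundary [Fintype V] [DecidableEq V] (G : SimpleGraph V) (S : Finset V) :
    Finset (Sym2 V) :=
  Finset.univ.filter fun e => e ∈ G.edgeSet ∧ ∃ u v, e = s(u, v) ∧ u ∈ S ∧ v ∉ S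

/-- A cutset of `G` is an edge boundary `∂S` with `∅ ≠ S ≠ V`. -/
def IsCutset [Fintype V] [DecidableEq V] (G : SimpleGraph V) (D : Finset (Sym2 V)) : Prop :=
  ∃ S : Finset V, S ≠ ∅ ∧ S ≠ Finset.univ ∧ D = edgeBoundary G S

/-- Symmetric difference of a finite family of edge sets: the set of edges occurring in an
odd number of members of the family. -/
noncomputable def symmDiffFamily [Fintype V] [DecidableEq V] {ι : Type*} (s : Finset ι)
    (f : ι → Finset (Sym2 V)) : Finset (Sym2 V) :=
  Finset.univ.filter fun e => Odd ((s.filter fun i => e ∈ f i).card)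

/-- A cut basis: a family of `n - 1` cutsets such that every element of the cut space is the
symmetric difference of a subfamily, and no nonempty subfamily has empty symmetric
difference. -/
def IsCutBasis [Fintype V] [DecidableEq V] (G : SimpleGraph V)
    (𝒟 : Finset (Finset (Sym2 V))) : Prop :=
  𝒟.card = Fintype.card V - 1 ∧
  (∀ D ∈ 𝒟, IsCutset G D) ∧
  (∀ S : Finset V, ∃ ℬ ⊆ 𝒟, edgeBoundary G S = symmDiffFamily ℬ id) ∧
  (∀ ℬ ⊆ 𝒟, ℬ.Nonempty → symmDiffFamily ℬ id ≠ ∅)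

/-- The weight `|D|` of an edge set `D`. -/
def weight (w : Sym2 V → ℝ) (D : Finset (Sym2 V)) : ℝ :=
  ∑ e ∈ D, w e

/-- A minimum cut basis: a cut basis of minimum total weight. -/
def IsMinCutBasis [Fintype V] [DecidableEq V] (G : SimpleGraph V) (w : Sym2 V → ℝ)
    (𝒟 : Finset (Finset (Sym2 V))) : Prop :=
  IsCutBasis G 𝒟 ∧
  ∀ 𝒟' : Finset (Finset (Sym2 V)), IsCutBasis G 𝒟' →
    ∑ D ∈ 𝒟, weight w D ≤ ∑ D ∈ 𝒟', weight w D

/-- A cutset is relevant if it belongs to at least one minimum cut basis. -/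
def IsRelevant [Fintype V] [DecidableEq V] (G : SimpleGraph V) (w : Sym2 V → ℝ)
    (D : Finset (Sym2 V)) : Prop :=
  ∃ 𝒟 : Finset (Finset (Sym2 V)), IsMinCutBasis G w 𝒟 ∧ D ∈ 𝒟

/-- A `u,v`-cut: a cutset of the form `∂S` with `u ∈ S` and `v ∉ S`. -/
def IsUVCut [Fintype V] [DecidableEq V] (G : SimpleGraph V) (u v : V)
    (D : Finset (Sym2 V)) : Prop :=
  ∃ S : Finset V, u ∈ S ∧ v ∉ S ∧ D = edgeBoundary G S

/-- A minimum-weight `u,v`-cut. -/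
def IsMinUVCut [Fintype V] [DecidableEq V] (G : SimpleGraph V) (w : Sym2 V → ℝ) (u v : V)
    (D : Finset (Sym2 V)) : Prop :=
  IsUVCut G u v D ∧ ∀ D' : Finset (Sym2 V), IsUVCut G u v D' → weight w D ≤ weight w D'

/-- A minimum `u,v`-cut with respect to unit weights (cardinality). -/
def IsMinUVCutCard [Fintype V] [DecidableEq V] (G : SimpleGraph V) (u v : V)
    (D : Finset (Sym2 V)) : Prop :=
  IsUVCut G u v D ∧ ∀ D' : Finset (Sym2 V), IsUVCut G u v D' → D.card ≤ D'.card

section aux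
variable [Fintype V] [DecidableEq V]

noncomputable def phi (A : Finset (Sym2 V)) : Sym2 V → ZMod 2 :=
  fun e => if e ∈ A then 1 else 0

lemma phi_inj : Function.Injective (phi (V := V)) := by
  intro A B h
  ext e
  have h2 := congrFun h e
  simp only [phi] at h2
  by_cases hA : e ∈ A <;> by_cases hB : e ∈ B <;> simp_all

lemma phi_empty : phi (∅ : Finset (Sym2 V)) = 0 := by
  funext e; simp [phi]

lemma two_eq_zero' : ∀ x : ZMod 2, x + x = 0 := by decide

lemma fun_add_self (f : Sym2 V → ZMod 2) : f + f = 0 := by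
  funext e; exact two_eq_zero' (f e)

lemma natCast_zmod_two (n : ℕ) : ((n : ZMod 2)) = if Odd n then 1 else 0 := by
  rcases Nat.even_or_odd n with ⟨k, rfl⟩ | ⟨k, rfl⟩
  · have h1 : ¬ Odd (k + k) := by
      rw [Nat.not_odd_iff_even]; exact ⟨k, rfl⟩
    rw [if_neg h1]
    push_cast
    have : (k : ZMod 2) + k = 0 := two_eq_zero' _
    simpa using this
  · have h1 : Odd (2 * k + 1) := ⟨k, rfl⟩
    rw [if_pos h1]
    push_cast
    have : (2 : ZMod 2) = 0 := by decide
    simp [this]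

lemma phi_symmDiffFamily {ι : Type*} (s : Finset ι) (f : ι → Finset (Sym2 V)) :
    phi (symmDiffFamily s f) = ∑ i ∈ s, phi (f i) := by
  funext e
  rw [Finset.sum_apply]
  simp only [phi, symmDiffFamily, mem_filter, mem_univ, true_and]
  rw [Finset.sum_boole, natCast_zmod_two]

lemma sum_phi_symmDiff {ι : Type*} [DecidableEq ι] (A B : Finset ι)
    (g : ι → Sym2 V → ZMod 2) :
    ∑ i ∈ symmDiff A B, g i = ∑ i ∈ A, g i + ∑ i ∈ B, g i := by
  have hA := Finset.sum_inter_add_sum_sdiff A B g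
  have hB := Finset.sum_inter_add_sum_sdiff B A g
  have hd : Disjoint (A \ B) (B \ A) := disjoint_sdiff_sdiff
  have hu : ∑ i ∈ symmDiff A B, g i = ∑ i ∈ A \ B, g i + ∑ i ∈ B \ A, g i := by
    rw [symmDiff_def]; exact Finset.sum_union hd
  have hcomm : A ∩ B = B ∩ A := Finset.inter_comm A B
  have hz : (∑ i ∈ A ∩ B, g i) + (∑ i ∈ A ∩ B, g i) = 0 := fun_add_self _
  have hz' : (∑ i ∈ B ∩ A, g i) + (∑ i ∈ B ∩ A, g i) = 0 := fun_add_self _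
  rw [hu, ← hA, ← hB, hcomm]
  linear_combination -hz'

lemma phi_symmDiff (A B : Finset (Sym2 V)) :
    phi (symmDiff A B) = phi A + phi B := by
  funext e
  simp only [phi, Pi.add_apply, Finset.mem_symmDiff]
  by_cases hA : e ∈ A <;> by_cases hB : e ∈ B <;> simp [hA, hB] <;> decide

lemma mem_edgeBoundary_pair (G : SimpleGraph V) (S : Finset V) (a b : V) :
    s(a, b) ∈ edgeBoundary G S ↔
      s(a, b) ∈ G.edgeSet ∧ ((a ∈ S ∧ b ∉ S) ∨ (b ∈ S ∧ a ∉ S)) := by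
  simp only [edgeBoundary, mem_filter, mem_univ, true_and, and_congr_right_iff]
  intro _
  constructor
  · rintro ⟨u, v, huv, hu, hv⟩
    rw [Sym2.eq_iff] at huv
    rcases huv with ⟨rfl, rfl⟩ | ⟨rfl, rfl⟩
    · exact Or.inl ⟨hu, hv⟩
    · exact Or.inr ⟨hu, hv⟩
  · rintro (⟨ha, hb⟩ | ⟨hb, ha⟩)
    · exact ⟨a, b, rfl, ha, hb⟩
    · exact ⟨b, a, Sym2.eq_swap, hb, ha⟩

lemma edgeBoundary_symmDiff (G : SimpleGraph V) (S T : Finset V) :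
    edgeBoundary G (symmDiff S T) = symmDiff (edgeBoundary G S) (edgeBoundary G T) := by
  ext e
  induction e using Sym2.ind with
  | _ a b =>
    simp only [Finset.mem_symmDiff, mem_edgeBoundary_pair, Finset.mem_symmDiff]
    by_cases h : s(a, b) ∈ G.edgeSet <;> tauto

lemma edgeBoundary_empty (G : SimpleGraph V) : edgeBoundary G (∅ : Finset V) = ∅ := by
  ext e; simp [edgeBoundary]

lemma edgeBoundary_univ (G : SimpleGraph V) : edgeBoundary G (Finset.univ : Finset V) = ∅ := by
  ext e; simp [edgeBoundary]

lemma edgeBoundary_subset_edgeSet (G : SimpleGraph V) (S : Finset V) {e : Sym2 V}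
    (he : e ∈ edgeBoundary G S) : e ∈ G.edgeSet := by
  simp only [edgeBoundary, mem_filter] at he
  exact he.2.1

lemma exists_cross (G : SimpleGraph V) (S : Finset V) {u v : V} (p : G.Walk u v)
    (hu : u ∈ S) (hv : v ∉ S) : ∃ a b, G.Adj a b ∧ a ∈ S ∧ b ∉ S := by
  induction p with
  | nil => exact absurd hu hv
  | @cons a b c h p ih =>
    by_cases hb : b ∈ S
    · exact ih hb hv
    · exact ⟨a, b, h, hu, hb⟩

lemma edgeBoundary_nonempty (G : SimpleGraph V) (hG : G.Connected) (S : Finset V)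
    (h0 : S ≠ ∅) (h1 : S ≠ Finset.univ) : (edgeBoundary G S).Nonempty := by
  obtain ⟨u, hu⟩ := Finset.nonempty_iff_ne_empty.2 h0
  have : ∃ v, v ∉ S := by
    by_contra h
    push_neg at h
    exact h1 (Finset.eq_univ_iff_forall.2 h)
  obtain ⟨v, hv⟩ := this
  obtain ⟨p⟩ := hG.preconnected u v
  obtain ⟨a, b, hab, ha, hb⟩ := exists_cross G S p hu hv
  exact ⟨s(a, b), (mem_edgeBoundary_pair G S a b).2 ⟨hab, Or.inl ⟨ha, hb⟩⟩⟩

end aux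

section main
variable [Fintype V] [DecidableEq V]

lemma symmDiff_subset' {ι : Type*} [DecidableEq ι] {A B C : Finset ι} (hA : A ⊆ C)
    (hB : B ⊆ C) : symmDiff A B ⊆ C := by
  intro x hx
  rw [Finset.mem_symmDiff] at hx
  rcases hx with ⟨h, _⟩ | ⟨h, _⟩
  · exact hA h
  · exact hB h

lemma basis_indep_contra {𝒟 : Finset (Finset (Sym2 V))}
    (hind : ∀ ℬ ⊆ 𝒟, ℬ.Nonempty → symmDiffFamily ℬ id ≠ ∅)
    {𝒞 : Finset (Finset (Sym2 V))} (hsub : 𝒞 ⊆ 𝒟) (hne : 𝒞.Nonempty)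
    (hz : ∑ C ∈ 𝒞, phi C = 0) : False := by
  apply hind 𝒞 hsub hne
  apply phi_inj
  rw [phi_symmDiffFamily, phi_empty]
  simpa using hz

lemma weight_lt_of_ssubset {w : Sym2 V → ℝ} {A D : Finset (Sym2 V)} (hsub : A ⊆ D)
    (hne : (D \ A).Nonempty) (hpos : ∀ e ∈ D, 0 < w e) : weight w A < weight w D := by
  have h := Finset.sum_sdiff (f := w) hsub
  have hpos' : 0 < ∑ e ∈ D \ A, w e :=
    Finset.sum_pos (fun e he => hpos e (Finset.mem_sdiff.1 he).1) hne
  unfold weight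
  linarith

lemma no_exchange (G : SimpleGraph V) (w : Sym2 V → ℝ) (𝒟 : Finset (Finset (Sym2 V)))
    (hbasis : IsCutBasis G 𝒟)
    (hmin : ∀ 𝒟' : Finset (Finset (Sym2 V)), IsCutBasis G 𝒟' →
      ∑ C ∈ 𝒟, weight w C ≤ ∑ C ∈ 𝒟', weight w C)
    (D A B : Finset (Sym2 V)) (hDmem : D ∈ 𝒟) (hAcut : IsCutset G A)
    (hphiD : phi D = phi A + phi B)
    (ℬB : Finset (Finset (Sym2 V))) (hBsub : ℬB ⊆ 𝒟) (hDB : D ∉ ℬB)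
    (hBphi : phi B = ∑ C ∈ ℬB, phi C)
    (hwA : weight w A < weight w D) : False := by
  obtain ⟨hcard, hcuts, hspan, hind⟩ := hbasis
  have hphiA : phi A = phi D + ∑ C ∈ ℬB, phi C := by
    rw [← hBphi]
    linear_combination -hphiD - fun_add_self (phi B)
  have hAD : A ≠ D := fun h => absurd hwA (by rw [h]; exact lt_irrefl _)
  have hBsub' : ℬB ⊆ 𝒟.erase D := Finset.subset_erase.2 ⟨hBsub, hDB⟩
  -- A is not in 𝒟
  have hAnot : A ∉ 𝒟 := by
    intro hA
    refine basis_indep_contra (𝒞 := symmDiff {A} (symmDiff {D} ℬB)) hind ?_ ⟨D, ?_⟩ ?_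
    · exact symmDiff_subset' (Finset.singleton_subset_iff.2 hA)
        (symmDiff_subset' (Finset.singleton_subset_iff.2 hDmem) hBsub)
    · rw [Finset.mem_symmDiff]
      refine Or.inr ⟨?_, ?_⟩
      · rw [Finset.mem_symmDiff]
        exact Or.inl ⟨Finset.mem_singleton_self D, hDB⟩
      · simp [hAD.symm]
    · rw [sum_phi_symmDiff, sum_phi_symmDiff, Finset.sum_singleton, Finset.sum_singleton,
        ← hphiA]
      exact fun_add_self _
  have hAerase : A ∉ 𝒟.erase D := fun h => hAnot (Finset.mem_of_mem_erase h)
  set 𝒟' : Finset (Finset (Sym2 V)) := insert A (𝒟.erase D) with h𝒟'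
  have hb' : IsCutBasis G 𝒟' := by
    refine ⟨?_, ?_, ?_, ?_⟩
    · rw [h𝒟', Finset.card_insert_of_notMem hAerase, Finset.card_erase_of_mem hDmem,
        Nat.sub_add_cancel (Finset.card_pos.2 ⟨D, hDmem⟩), hcard]
    · intro C hC
      rw [h𝒟', Finset.mem_insert] at hC
      rcases hC with rfl | hC
      · exact hAcut
      · exact hcuts C (Finset.mem_of_mem_erase hC)
    · intro S
      obtain ⟨ℬ, hℬsub, hℬeq⟩ := hspan S
      by_cases hDℬ : D ∈ ℬ
      · refine ⟨symmDiff (ℬ.erase D) (symmDiff {A} ℬB), ?_, ?_⟩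
        · refine symmDiff_subset' ?_ (symmDiff_subset' ?_ ?_)
          · exact (Finset.erase_subset_erase D hℬsub).trans (Finset.subset_insert _ _)
          · exact Finset.singleton_subset_iff.2 (Finset.mem_insert_self _ _)
          · exact hBsub'.trans (Finset.subset_insert _ _)
        · apply phi_inj
          rw [hℬeq, phi_symmDiffFamily, phi_symmDiffFamily]
          simp only [id_eq]
          rw [sum_phi_symmDiff, sum_phi_symmDiff, Finset.sum_singleton,
            ← Finset.add_sum_erase ℬ _ hDℬ, hphiA]
          linear_combination -fun_add_self (∑ C ∈ ℬB, phi C)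
      · refine ⟨ℬ, ?_, hℬeq⟩
        have : ℬ ⊆ 𝒟.erase D := Finset.subset_erase.2 ⟨hℬsub, hDℬ⟩
        exact this.trans (Finset.subset_insert _ _)
    · intro ℬ hℬsub hne heq
      have hsum : ∑ C ∈ ℬ, phi C = 0 := by
        have h2 := congrArg phi heq
        rw [phi_symmDiffFamily, phi_empty] at h2
        simpa using h2
      by_cases hAℬ : A ∈ ℬ
      · have herase : ℬ.erase A ⊆ 𝒟.erase D := by
          intro x hx
          have hxA : x ≠ A := (Finset.mem_erase.1 hx).1
          have hxℬ : x ∈ ℬ := (Finset.mem_erase.1 hx).2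
          have := hℬsub hxℬ
          rw [h𝒟', Finset.mem_insert] at this
          exact this.resolve_left hxA
        refine basis_indep_contra (𝒞 := symmDiff (ℬ.erase A) (symmDiff {D} ℬB)) hind ?_ ⟨D, ?_⟩ ?_
        · refine symmDiff_subset' (herase.trans (Finset.erase_subset _ _))
            (symmDiff_subset' (Finset.singleton_subset_iff.2 hDmem) hBsub)
        · rw [Finset.mem_symmDiff]
          refine Or.inr ⟨?_, ?_⟩
          · rw [Finset.mem_symmDiff]
            exact Or.inl ⟨Finset.mem_singleton_self D, hDB⟩
          · intro hDin
            exact absurd (Finset.mem_erase.1 (herase hDin)).1 (by simp)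
        · rw [sum_phi_symmDiff, sum_phi_symmDiff, Finset.sum_singleton, ← hphiA,
            Finset.sum_erase_add ℬ _ hAℬ]
          exact hsum
      · refine basis_indep_contra (𝒞 := ℬ) hind ?_ hne hsum
        intro x hx
        have := hℬsub hx
        rw [h𝒟', Finset.mem_insert] at this
        rcases this with rfl | h
        · exact absurd hx hAℬ
        · exact Finset.mem_of_mem_erase h
  have h1 := hmin 𝒟' hb'
  have h2 : ∑ C ∈ 𝒟', weight w C = weight w A + ∑ C ∈ 𝒟.erase D, weight w C :=
    Finset.sum_insert hAerase
  have h3 : ∑ C ∈ 𝒟, weight w C = weight w D + ∑ C ∈ 𝒟.erase D, weight w C :=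
    (Finset.add_sum_erase _ _ hDmem).symm
  linarith

theorem relevant_is_bond' (G : SimpleGraph V) (hG : G.Connected)
    (w : Sym2 V → ℝ) (hw : ∀ e ∈ G.edgeSet, 0 < w e)
    (D : Finset (Sym2 V)) (hD : IsCutset G D) (hrel : IsRelevant G w D) :
    ¬ ∃ D' : Finset (Sym2 V), IsCutset G D' ∧ D' ⊂ D := by
  rintro ⟨D', hD'cut, hss⟩
  obtain ⟨𝒟, ⟨hbasis, hmin⟩, hDmem⟩ := hrel
  obtain ⟨S, hS0, hS1, hDS⟩ := hD
  obtain ⟨T, hT0, hT1, hD'T⟩ := hD'cut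
  have hsub : D' ⊆ D := hss.subset
  have hDedge : ∀ e ∈ D, e ∈ G.edgeSet := fun e he =>
    edgeBoundary_subset_edgeSet G S (hDS ▸ he)
  have hpos : ∀ e ∈ D, 0 < w e := fun e he => hw e (hDedge e he)
  have hD''ne : (D \ D').Nonempty := by
    obtain ⟨x, hx, hnx⟩ := Finset.exists_of_ssubset hss
    exact ⟨x, Finset.mem_sdiff.2 ⟨hx, hnx⟩⟩
  have hDsymm : D = symmDiff D' (D \ D') := by
    ext e
    have h := @hsub e
    simp only [Finset.mem_symmDiff, Finset.mem_sdiff]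
    tauto
  have hphiD : phi D = phi D' + phi (D \ D') := by
    conv_lhs => rw [hDsymm]
    rw [phi_symmDiff]
  have hsdiff : symmDiff D D' = D \ D' := by
    ext e
    have h := @hsub e
    simp only [Finset.mem_symmDiff, Finset.mem_sdiff]
    tauto
  have hD''bound : D \ D' = edgeBoundary G (symmDiff S T) := by
    rw [edgeBoundary_symmDiff, ← hDS, ← hD'T, hsdiff]
  have hSTne : symmDiff S T ≠ ∅ := by
    intro h
    rw [h, edgeBoundary_empty] at hD''bound
    exact Finset.not_nonempty_empty (hD''bound ▸ hD''ne)
  have hSTuniv : symmDiff S T ≠ Finset.univ := by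
    intro h
    rw [h, edgeBoundary_univ] at hD''bound
    exact Finset.not_nonempty_empty (hD''bound ▸ hD''ne)
  have hD''cut : IsCutset G (D \ D') := ⟨symmDiff S T, hSTne, hSTuniv, hD''bound⟩
  obtain ⟨ℬ', hB'sub, hB'eq⟩ := hbasis.2.2.1 T
  obtain ⟨ℬ'', hB''sub, hB''eq⟩ := hbasis.2.2.1 (symmDiff S T)
  have hind := hbasis.2.2.2
  have hphiD' : phi D' = ∑ C ∈ ℬ', phi C := by
    rw [hD'T, hB'eq, phi_symmDiffFamily]
    simp
  have hphiD'' : phi (D \ D') = ∑ C ∈ ℬ'', phi C := by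
    rw [hD''bound, hB''eq, phi_symmDiffFamily]
    simp
  have h𝒞z : ∑ C ∈ symmDiff (symmDiff ℬ' ℬ'') {D}, phi C = 0 := by
    rw [sum_phi_symmDiff, sum_phi_symmDiff, Finset.sum_singleton, ← hphiD', ← hphiD'',
      ← hphiD]
    exact fun_add_self _
  have h𝒞sub : symmDiff (symmDiff ℬ' ℬ'') {D} ⊆ 𝒟 :=
    symmDiff_subset' (symmDiff_subset' hB'sub hB''sub)
      (Finset.singleton_subset_iff.2 hDmem)
  have h𝒞empty : symmDiff (symmDiff ℬ' ℬ'') {D} = ∅ := by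
    by_contra h
    exact basis_indep_contra hind h𝒞sub (Finset.nonempty_iff_ne_empty.2 h) h𝒞z
  have hBBeq : symmDiff ℬ' ℬ'' = {D} :=
    symmDiff_eq_bot.1 (by simpa [Finset.bot_eq_empty] using h𝒞empty)
  have hDin : D ∈ symmDiff ℬ' ℬ'' := by
    rw [hBBeq]; exact Finset.mem_singleton_self D
  rw [Finset.mem_symmDiff] at hDin
  rcases hDin with ⟨hD1, hD2⟩ | ⟨hD1, hD2⟩
  · -- D ∈ ℬ', D ∉ ℬ'' : swap in D'
    exact no_exchange G w 𝒟 hbasis hmin D D' (D \ D') hDmem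
      ⟨T, hT0, hT1, hD'T⟩ hphiD ℬ'' hB''sub hD2 hphiD''
      (weight_lt_of_ssubset hsub hD''ne hpos)
  · -- D ∈ ℬ'', D ∉ ℬ' : swap in D \ D'
    have hD'ne : D'.Nonempty := by
      rw [hD'T]
      exact edgeBoundary_nonempty G hG T hT0 hT1
    have hrest : (D \ (D \ D')).Nonempty := by
      rwa [Finset.sdiff_sdiff_self_left, Finset.inter_eq_right.2 hsub]
    exact no_exchange G w 𝒟 hbasis hmin D (D \ D') D' hDmem hD''cut
      (by rw [hphiD, add_comm]) ℬ' hB'sub hD2 hphiD'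
      (weight_lt_of_ssubset (Finset.sdiff_subset) hrest hpos)

end main

/-- In a finite connected simple graph with positive edge weights, every relevant
cutset `D` is a bond: no cutset of `G` is a proper subset of `D`. -/
theorem relevant_is_bond [Fintype V] [DecidableEq V] (G : SimpleGraph V) (hG : G.Connected)
    (w : Sym2 V → ℝ) (hw : ∀ e ∈ G.edgeSet, 0 < w e)
    (D : Finset (Sym2 V)) (hD : IsCutset G D) (hrel : IsRelevant G w D) :
    ¬ ∃ D' : Finset (Sym2 V), IsCutset G D' ∧ D' ⊂ D := by
  exact relevant_is_bond' G hG w hw D hD hrel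
end

section
/- Let G be a finite connected simple graph with positive real edge weights, and let u and v be distinct vertices of G. Every minimum-weight u,v-cut of G is relevant, i.e., it belongs to some minimum cut basis of G. -/
open Finset
open scoped Classical

variable {V : Type*}

/-!
Let `𝒟` be a minimum cut basis not containing the minimum `u,v`-cut `D`, and write `D` as the
symmetric difference of a subfamily `ℬ ⊆ 𝒟`. Summing characteristic vectors over `𝔽₂` along a
`u,v`-walk counts crossings mod 2: the walk crosses `D` an odd number of times, hence it crosses
some `B ∈ ℬ` an odd number of times, so `B` is a `u,v`-cut and `|D| ≤ |B|`. Exchanging `B` for `D`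
in `𝒟` yields a cut basis of no larger weight that contains `D`.
-/

open scoped symmDiff

section Parity

variable {α : Type*} [DecidableEq α]

/-- Over `𝔽₂`, symmetric differences of edge sets become sums of characteristic vectors. -/
def indicatorMod2 (X : Finset α) (a : α) : ZMod 2 :=
  if a ∈ X then 1 else 0

lemma indicatorMod2_injective : Function.Injective (indicatorMod2 (α := α)) := by
  intro X Y h
  ext a
  have ha := congrFun h a
  by_cases hX : a ∈ X <;> by_cases hY : a ∈ Y <;> simp_all [indicatorMod2]

lemma indicatorMod2_empty : indicatorMod2 (∅ : Finset α) = 0 := by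
  funext a; simp [indicatorMod2]

lemma indicatorMod2_add_eq_zero_iff (X : Finset α) (a b : α) :
    indicatorMod2 X a + indicatorMod2 X b = 0 ↔ (a ∈ X ↔ b ∈ X) := by
  unfold indicatorMod2
  split_ifs <;> simp_all; decide

lemma sum_indicatorMod2_singleton_apply (T : Finset α) (a : α) :
    ∑ x ∈ T, indicatorMod2 {x} a = indicatorMod2 T a := by
  simp [indicatorMod2]

end Parity

lemma sum_symmDiff_eq_add {ι M : Type*} [DecidableEq ι] [AddCommGroup M] [Module (ZMod 2) M]
    (s t : Finset ι) (f : ι → M) :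
    ∑ i ∈ s ∆ t, f i = ∑ i ∈ s, f i + ∑ i ∈ t, f i := by
  rw [symmDiff_def, sup_eq_union, sum_union disjoint_sdiff_sdiff,
    ← sum_inter_add_sum_sdiff s t, ← sum_inter_add_sum_sdiff t s,
    inter_comm t s, add_add_add_comm, ZModModule.add_self, zero_add]

section Cuts

variable [Fintype V] [DecidableEq V]

lemma indicatorMod2_symmDiffFamily {ι : Type*} (s : Finset ι) (f : ι → Finset (Sym2 V)) :
    indicatorMod2 (symmDiffFamily s f) = ∑ i ∈ s, indicatorMod2 (f i) := by
  funext e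
  simp only [Finset.sum_apply, indicatorMod2, sum_boole, symmDiffFamily,
    mem_filter, mem_univ, true_and, CharTwo.natCast_eq_ite, ← Nat.not_even_iff_odd,
    ite_not]

lemma symmDiffFamily_eq_iff {ι : Type*} (s : Finset ι) (f : ι → Finset (Sym2 V))
    (X : Finset (Sym2 V)) :
    symmDiffFamily s f = X ↔ ∑ i ∈ s, indicatorMod2 (f i) = indicatorMod2 X := by
  rw [← indicatorMod2_symmDiffFamily]
  exact indicatorMod2_injective.eq_iff.symm

lemma symmDiffFamily_image {ι : Type*} [DecidableEq ι] {s : Finset ι}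
    {f : ι → Finset (Sym2 V)} (hf : Set.InjOn f s) :
    symmDiffFamily (s.image f) id = symmDiffFamily s f := by
  rw [symmDiffFamily_eq_iff, indicatorMod2_symmDiffFamily, sum_image hf]
  rfl

variable (G : SimpleGraph V)

lemma mem_edgeBoundary {S : Finset V} {a b : V} :
    s(a, b) ∈ edgeBoundary G S ↔ G.Adj a b ∧ (a ∈ S ∧ b ∉ S ∨ b ∈ S ∧ a ∉ S) := by
  simp only [edgeBoundary, mem_filter, mem_univ, true_and,
    SimpleGraph.mem_edgeSet, Sym2.eq_iff]
  constructor
  · rintro ⟨h, x, y, ⟨rfl, rfl⟩ | ⟨rfl, rfl⟩, hx, hy⟩ <;> tauto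
  · rintro ⟨h, ⟨ha, hb⟩ | ⟨hb, ha⟩⟩
    · exact ⟨h, a, b, Or.inl ⟨rfl, rfl⟩, ha, hb⟩
    · exact ⟨h, b, a, Or.inr ⟨rfl, rfl⟩, hb, ha⟩

lemma edgeBoundary_compl (S : Finset V) : edgeBoundary G Sᶜ = edgeBoundary G S := by
  ext e
  induction e using Sym2.ind with
  | _ a b => simp only [mem_edgeBoundary, mem_compl]; tauto

lemma indicatorMod2_edgeBoundary_apply (S : Finset V) (a b : V) :
    indicatorMod2 (edgeBoundary G S) s(a, b) =
      if G.Adj a b then indicatorMod2 S a + indicatorMod2 S b else 0 := by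
  unfold indicatorMod2
  by_cases hab : G.Adj a b <;> by_cases ha : a ∈ S <;> by_cases hb : b ∈ S <;>
    simp [mem_edgeBoundary, hab, ha, hb]; decide

lemma edgeBoundary_eq_symmDiffFamily_singleton (T : Finset V) :
    edgeBoundary G T = symmDiffFamily T fun x => edgeBoundary G {x} := by
  rw [eq_comm, symmDiffFamily_eq_iff]
  funext e
  induction e using Sym2.ind with
  | _ a b =>
    simp only [Finset.sum_apply, indicatorMod2_edgeBoundary_apply]
    split_ifs
    · rw [sum_add_distrib, sum_indicatorMod2_singleton_apply,
        sum_indicatorMod2_singleton_apply]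
    · exact sum_const_zero

end Cuts

namespace SimpleGraph.Walk

variable {G : SimpleGraph V}

def edgeSum {a b : V} (p : G.Walk a b) : (Sym2 V → ZMod 2) →+ ZMod 2 where
  toFun f := (p.edges.map f).sum
  map_zero' := by simp [Pi.zero_def]
  map_add' f g := by simp [Pi.add_def, List.sum_map_add]

@[simp]
lemma edgeSum_nil {a : V} (f : Sym2 V → ZMod 2) : (nil : G.Walk a a).edgeSum f = 0 := by
  simp [edgeSum]

@[simp]
lemma edgeSum_cons {a b c : V} (h : G.Adj a b) (p : G.Walk b c) (f : Sym2 V → ZMod 2) :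
    (cons h p).edgeSum f = f s(a, b) + p.edgeSum f := by
  simp [edgeSum]

section Cuts

variable [Fintype V] [DecidableEq V]

/-- A walk crosses every cut an even number of times, unless the cut separates its ends. -/
lemma edgeSum_indicatorMod2_edgeBoundary {a b : V} (p : G.Walk a b) (S : Finset V) :
    p.edgeSum (indicatorMod2 (edgeBoundary G S)) = indicatorMod2 S a + indicatorMod2 S b := by
  induction p with
  | nil => simp [ZModModule.add_self]
  | cons h p ih =>
    rw [edgeSum_cons, ih, indicatorMod2_edgeBoundary_apply, if_pos h,
      ZModModule.add_add_add_cancel]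

lemma isUVCut_of_edgeSum_ne_zero {u v : V} (p : G.Walk u v) (T : Finset V)
    (h : p.edgeSum (indicatorMod2 (edgeBoundary G T)) ≠ 0) :
    IsUVCut G u v (edgeBoundary G T) := by
  rw [edgeSum_indicatorMod2_edgeBoundary, Ne, indicatorMod2_add_eq_zero_iff] at h
  by_cases hu : u ∈ T
  · exact ⟨T, hu, fun hv => h (iff_of_true hu hv), rfl⟩
  · refine ⟨Tᶜ, mem_compl.2 hu, fun hv => h ?_, (edgeBoundary_compl G T).symm⟩
    exact iff_of_false hu (mem_compl.1 hv)

end Cuts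

end SimpleGraph.Walk

section CutBasis

variable [Fintype V] [DecidableEq V] {G : SimpleGraph V}

lemma edgeBoundary_nonempty_of_reachable {a b : V} (hab : G.Reachable a b) {S : Finset V}
    (ha : a ∈ S) (hb : b ∉ S) : (edgeBoundary G S).Nonempty := by
  obtain ⟨p⟩ := hab
  rw [nonempty_iff_ne_empty]
  intro hS
  have h := p.edgeSum_indicatorMod2_edgeBoundary S
  rw [hS, indicatorMod2_empty, map_zero, eq_comm, indicatorMod2_add_eq_zero_iff] at h
  exact hb (h.1 ha)

/-- Evaluate both sides along a `u,v`-walk. -/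
lemma exists_mem_isUVCut_of_edgeBoundary_eq_symmDiffFamily {u v : V} (huv : G.Reachable u v)
    {S : Finset V} (hu : u ∈ S) (hv : v ∉ S) {ℬ : Finset (Finset (Sym2 V))}
    (hℬ : ∀ B ∈ ℬ, IsCutset G B) (hS : edgeBoundary G S = symmDiffFamily ℬ id) :
    ∃ B ∈ ℬ, IsUVCut G u v B := by
  obtain ⟨p⟩ := huv
  have hsum : p.edgeSum (indicatorMod2 (edgeBoundary G S)) ≠ 0 := by
    rw [p.edgeSum_indicatorMod2_edgeBoundary, Ne, indicatorMod2_add_eq_zero_iff]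
    exact fun h => hv (h.1 hu)
  rw [hS, indicatorMod2_symmDiffFamily, map_sum] at hsum
  obtain ⟨B, hB, hne⟩ := exists_ne_zero_of_sum_ne_zero hsum
  obtain ⟨T, -, -, rfl⟩ := hℬ B hB
  exact ⟨_, hB, p.isUVCut_of_edgeSum_ne_zero T hne⟩

lemma edgeBoundary_singleton_injOn (hG : G.Connected) (v₀ : V) :
    Set.InjOn (fun x => edgeBoundary G {x}) ↑(univ.erase v₀) := by
  intro x hx y hy (hxy : edgeBoundary G {x} = edgeBoundary G {y})
  by_contra hne
  have hxy₀ : edgeBoundary G {x, y} = ∅ := by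
    rw [edgeBoundary_eq_symmDiffFamily_singleton, symmDiffFamily_eq_iff,
      sum_pair hne, indicatorMod2_empty, hxy, ZModModule.add_self]
  have hv₀ : v₀ ∉ ({x, y} : Finset V) := by
    simp_all [eq_comm]
  simpa [hxy₀] using edgeBoundary_nonempty_of_reachable (hG.preconnected x v₀)
    (mem_insert_self x {y}) hv₀

lemma IsUVCut.isCutset {u v : V} {D : Finset (Sym2 V)} (hD : IsUVCut G u v D) :
    IsCutset G D := by
  obtain ⟨S, hu, hv, rfl⟩ := hD
  exact ⟨S, ne_empty_of_mem hu, fun h => hv (h ▸ mem_univ v), rfl⟩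

lemma isCutBasis_image_edgeBoundary_singleton (hG : G.Connected) (v₀ : V) :
    IsCutBasis G ((univ.erase v₀).image fun x => edgeBoundary G {x}) := by
  have hinj := edgeBoundary_singleton_injOn hG v₀
  have hfamily : ∀ T ⊆ univ.erase v₀,
      symmDiffFamily (T.image fun x => edgeBoundary G {x}) id = edgeBoundary G T := fun T hT => by
    rw [symmDiffFamily_image (hinj.mono hT), edgeBoundary_eq_symmDiffFamily_singleton]
  have hsub : ∀ T : Finset V, v₀ ∉ T → T ⊆ univ.erase v₀ := fun T hT x hx =>
    mem_erase.2 ⟨ne_of_mem_of_not_mem hx hT, mem_univ x⟩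
  refine ⟨?_, ?_, fun S => ?_, fun ℬ hℬ hne => ?_⟩
  · rw [card_image_of_injOn hinj, card_erase_of_mem (mem_univ v₀), card_univ]
  · simp only [mem_image]
    rintro _ ⟨x, hx, rfl⟩
    exact IsUVCut.isCutset (u := x) (v := v₀)
      ⟨{x}, mem_singleton_self x, by simpa using ne_of_mem_erase hx |>.symm, rfl⟩
  · by_cases hS : v₀ ∈ S
    · refine ⟨_, image_subset_image (hsub Sᶜ (notMem_compl.2 hS)), ?_⟩
      rw [hfamily _ (hsub Sᶜ (notMem_compl.2 hS)), edgeBoundary_compl]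
    · exact ⟨_, image_subset_image (hsub S hS), (hfamily S (hsub S hS)).symm⟩
  · obtain ⟨T, hT, rfl⟩ := subset_image_iff.1 hℬ
    obtain ⟨x, hx⟩ := image_nonempty.1 hne
    rw [hfamily T hT, ← nonempty_iff_ne_empty]
    exact edgeBoundary_nonempty_of_reachable (hG.preconnected x v₀) hx
      fun h => notMem_erase v₀ _ (hT h)

lemma exists_isMinCutBasis [Nonempty V] (hG : G.Connected) (w : Sym2 V → ℝ) :
    ∃ 𝒟, IsMinCutBasis G w 𝒟 := by
  obtain ⟨v₀⟩ := ‹Nonempty V›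
  obtain ⟨𝒟, h𝒟, hmin⟩ := (univ.filter (IsCutBasis G)).exists_min_image
    (fun 𝒟 => ∑ D ∈ 𝒟, weight w D)
    ⟨_, mem_filter.2 ⟨mem_univ _, isCutBasis_image_edgeBoundary_singleton hG v₀⟩⟩
  exact ⟨𝒟, (mem_filter.1 h𝒟).2,
    fun 𝒟' h𝒟' => hmin 𝒟' (mem_filter.2 ⟨mem_univ _, h𝒟'⟩)⟩

end CutBasis

section Exchange

variable [Fintype V] [DecidableEq V] {G : SimpleGraph V} {𝒟 ℬ : Finset (Finset (Sym2 V))}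
  {B D : Finset (Sym2 V)}

/-- Steinitz exchange over `𝔽₂`. -/
lemma exists_subset_insert_erase_symmDiffFamily_eq (hℬ : ℬ ⊆ 𝒟) (hB : B ∈ ℬ)
    (hD : D = symmDiffFamily ℬ id) {𝒞 : Finset (Finset (Sym2 V))} (h𝒞 : 𝒞 ⊆ 𝒟) :
    ∃ 𝒞' ⊆ insert D (𝒟.erase B), symmDiffFamily 𝒞' id = symmDiffFamily 𝒞 id := by
  by_cases hB𝒞 : B ∈ 𝒞
  · refine ⟨{D} ∆ (𝒞 ∆ ℬ), fun X hX => ?_, ?_⟩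
    · rcases mem_symmDiff.1 hX with ⟨hXD, -⟩ | ⟨hX, -⟩
      · exact mem_insert.2 (Or.inl (mem_singleton.1 hXD))
      · have hXB : X ≠ B := by
          rintro rfl
          simp [mem_symmDiff, hB, hB𝒞] at hX
        refine mem_insert_of_mem (mem_erase.2 ⟨hXB, ?_⟩)
        rcases mem_symmDiff.1 hX with ⟨hX, -⟩ | ⟨hX, -⟩
        exacts [h𝒞 hX, hℬ hX]
    · apply indicatorMod2_injective
      simp only [indicatorMod2_symmDiffFamily, id, sum_symmDiff_eq_add, sum_singleton, hD]
      rw [add_left_comm, ZModModule.add_self, add_zero]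
  · exact ⟨𝒞, fun X hX => mem_insert_of_mem
      (mem_erase.2 ⟨ne_of_mem_of_not_mem hX hB𝒞, h𝒞 hX⟩), rfl⟩

lemma symmDiffFamily_ne_empty_of_subset_insert_erase
    (hindep : ∀ 𝒞 ⊆ 𝒟, 𝒞.Nonempty → symmDiffFamily 𝒞 id ≠ ∅) (hℬ : ℬ ⊆ 𝒟) (hB : B ∈ ℬ)
    (hD : D = symmDiffFamily ℬ id) {𝒞 : Finset (Finset (Sym2 V))}
    (h𝒞 : 𝒞 ⊆ insert D (𝒟.erase B)) (hne : 𝒞.Nonempty) : symmDiffFamily 𝒞 id ≠ ∅ := by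
  by_cases hD𝒞 : D ∈ 𝒞
  · have hsub : 𝒞.erase D ⊆ 𝒟.erase B := fun X hX =>
      (mem_insert.1 (h𝒞 (mem_of_mem_erase hX))).resolve_left
        (ne_of_mem_erase hX)
    have hsame : symmDiffFamily ((𝒞.erase D) ∆ ℬ) id = symmDiffFamily 𝒞 id := by
      apply indicatorMod2_injective
      rw [indicatorMod2_symmDiffFamily, indicatorMod2_symmDiffFamily, sum_symmDiff_eq_add,
        ← indicatorMod2_symmDiffFamily ℬ, ← hD]
      exact sum_erase_add _ (fun X => indicatorMod2 X) hD𝒞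
    have hB' : B ∈ (𝒞.erase D) ∆ ℬ :=
      mem_symmDiff.2 (Or.inr ⟨hB, fun h => notMem_erase B 𝒟 (hsub h)⟩)
    rw [← hsame]
    refine hindep _ (fun X hX => ?_) ⟨B, hB'⟩
    rcases mem_symmDiff.1 hX with ⟨hX, -⟩ | ⟨hX, -⟩
    exacts [mem_of_mem_erase (hsub hX), hℬ hX]
  · exact hindep 𝒞 (fun X hX => mem_of_mem_erase ((mem_insert.1 (h𝒞 hX)).resolve_left
      (ne_of_mem_of_not_mem hX hD𝒞))) hne

lemma IsCutBasis.exchange (h𝒟 : IsCutBasis G 𝒟) (hℬ : ℬ ⊆ 𝒟) (hB : B ∈ ℬ)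
    (hDcut : IsCutset G D) (hD𝒟 : D ∉ 𝒟) (hD : D = symmDiffFamily ℬ id) :
    IsCutBasis G (insert D (𝒟.erase B)) := by
  obtain ⟨hcard, hcuts, hspan, hindep⟩ := h𝒟
  refine ⟨?_, fun X hX => ?_, fun S => ?_, fun 𝒞 h𝒞 hne =>
    symmDiffFamily_ne_empty_of_subset_insert_erase hindep hℬ hB hD h𝒞 hne⟩
  · rw [card_insert_of_notMem fun h => hD𝒟 (mem_of_mem_erase h),
      card_erase_add_one (hℬ hB), hcard]
  · rcases mem_insert.1 hX with rfl | hX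
    exacts [hDcut, hcuts X (mem_of_mem_erase hX)]
  · obtain ⟨𝒞, h𝒞, hS⟩ := hspan S
    obtain ⟨𝒞', h𝒞', hsame⟩ := exists_subset_insert_erase_symmDiffFamily_eq hℬ hB hD h𝒞
    exact ⟨𝒞', h𝒞', hS.trans hsame.symm⟩

lemma IsMinCutBasis.exchange {w : Sym2 V → ℝ} (h𝒟 : IsMinCutBasis G w 𝒟) (hℬ : ℬ ⊆ 𝒟)
    (hB : B ∈ ℬ) (hDcut : IsCutset G D) (hD𝒟 : D ∉ 𝒟) (hD : D = symmDiffFamily ℬ id)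
    (hDB : weight w D ≤ weight w B) : IsMinCutBasis G w (insert D (𝒟.erase B)) := by
  refine ⟨h𝒟.1.exchange hℬ hB hDcut hD𝒟 hD, fun 𝒟' h𝒟' => le_trans ?_ (h𝒟.2 𝒟' h𝒟')⟩
  rw [sum_insert fun h => hD𝒟 (mem_of_mem_erase h),
    ← add_sum_erase 𝒟 _ (hℬ hB)]
  exact add_le_add_left hDB _

end Exchange

theorem min_uv_cut_is_relevant_general [Fintype V] [DecidableEq V] (G : SimpleGraph V)
    (hG : G.Connected) (w : Sym2 V → ℝ)
    (u v : V) (D : Finset (Sym2 V)) (hD : IsMinUVCut G w u v D) :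
    IsRelevant G w D := by
  obtain ⟨hDuv, hmin⟩ := hD
  have hDcut := hDuv.isCutset
  obtain ⟨S, hu, hv, rfl⟩ := hDuv
  have : Nonempty V := ⟨u⟩
  obtain ⟨𝒟, h𝒟⟩ := exists_isMinCutBasis hG w
  by_cases hD𝒟 : edgeBoundary G S ∈ 𝒟
  · exact ⟨𝒟, h𝒟, hD𝒟⟩
  obtain ⟨-, hcuts, hspan, -⟩ := h𝒟.1
  obtain ⟨ℬ, hℬ𝒟, hℬ⟩ := hspan S
  obtain ⟨B, hBℬ, hB⟩ := exists_mem_isUVCut_of_edgeBoundary_eq_symmDiffFamily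
    (hG.preconnected u v) hu hv (fun B hB => hcuts B (hℬ𝒟 hB)) hℬ
  exact ⟨_, h𝒟.exchange hℬ𝒟 hBℬ hDcut hD𝒟 hℬ (hmin B hB),
    mem_insert_self _ _⟩

/-- In a finite connected simple graph with positive edge weights, every
minimum-weight `u,v`-cut for distinct vertices `u, v` is relevant. -/
theorem min_uv_cut_is_relevant [Fintype V] [DecidableEq V] (G : SimpleGraph V)
    (hG : G.Connected) (w : Sym2 V → ℝ) (hw : ∀ e ∈ G.edgeSet, 0 < w e)
    (u v : V) (huv : u ≠ v) (D : Finset (Sym2 V)) (hD : IsMinUVCut G w u v D) :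
    IsRelevant G w D :=
  min_uv_cut_is_relevant_general G hG w u v D hD
end
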